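/- Let n ≥ 1, b ≥ 2 be integers and let X_1, …, X_b be independent (not necessarily identically distributed) random variables with values in {1,…,n}. Let C := b − |{X_1,…,X_b}| be the number of collisions, and suppose E[C] > 0. Then there exists a probability measure ν on ℤ_{≥0} × ℤ_{≥0} whose first marginal is the law of C, whose second marginal is the size-biased law of C (the law assigning probability k·P(C = k)/E[C] to each k), and which is supported on the set {(x, y) : y − x ∈ {−1, 0, 1, 2}}. -/

import Mathlib

/-!
Write `C = ∑ᵢ Iᵢ` with `Iᵢ = 1{Xᵢ ∈ {X_l : l < i}}`: size-biasing `C` means choosing `i` with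
weight `P(Iᵢ = 1)` and then sampling `X` conditioned on `Iᵢ = 1`. The coupling draws `i`, a value
`a` and an index `l < i` with weight `P(Xᵢ = a) · P(a occurs first at index l in an independent
copy of X)`, and moves `x` to `y` by setting `yᵢ = a` and, unless `a` already occurs among
`x_l, …, x_{i-1}`, also `y_l = a`. If `L < i` is the last index with `y_L = a`, the first branch
reaches `y` only from `l = L` and the second from exactly the `l ≤ L`; the total weight is
`P(X = y)` times `P(a does not occur up to L) + P(a occurs first at or before L) = 1`. So the
second marginal is `y ↦ C(y) P(X = y)`, and since `y` arises from `x` by setting at most two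
coordinates to `a`, the number of collisions changes by `-1`, `0`, `1` or `2`.
-/

open MeasureTheory ProbabilityTheory Filter Topology
open scoped ENNReal NNReal

/-- The size-biased law of a distribution `L` on `ℕ`, with mean `m`: it assigns
mass `k·L{k}/m` to each `k ≥ 0`. -/
noncomputable def sizeBiased (L : Measure ℕ) (m : ℝ) : Measure ℕ :=
  Measure.sum fun k : ℕ => (((k : ℝ≥0∞) * L ({k} : Set ℕ)) / ENNReal.ofReal m) • Measure.dirac k

open Finset Function

theorem Finset.sum_mul_prod_filter_lt_add_prod {ι R : Type*} [LinearOrder ι] [CommSemiring R]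
    (q r : ι → R) (s : Finset ι) (h : ∀ i ∈ s, q i + r i = 1) :
    ∑ l ∈ s, q l * ∏ j ∈ s with j < l, r j + ∏ j ∈ s, r j = 1 := by
  induction s using Finset.induction_on_max with
  | empty => simp
  | insert a s ha ih =>
    have has : a ∉ s := fun h => (ha a h).false
    have hfilter : ∀ l ∈ s, (insert a s).filter (· < l) = s.filter (· < l) := fun l hl => by
      rw [filter_insert, if_neg (ha l hl).not_gt]
    rw [sum_insert has, prod_insert has, filter_insert, if_neg (lt_irrefl a),
      filter_true_of_mem ha, sum_congr rfl fun l hl => by rw [hfilter l hl]]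
    calc q a * ∏ j ∈ s, r j + ∑ l ∈ s, q l * ∏ j ∈ s with j < l, r j + r a * ∏ j ∈ s, r j
        = (q a + r a) * ∏ j ∈ s, r j + ∑ l ∈ s, q l * ∏ j ∈ s with j < l, r j := by ring
      _ = 1 := by
        rw [h a (mem_insert_self a s), one_mul, add_comm]
        exact ih fun i hi => h i (mem_insert_of_mem hi)

lemma mem_univ_pi_update_update {ι β : Type*} [DecidableEq ι] {k k' : ι} (hk : k ≠ k')
    (y x : ι → β) (T T' : Set β) :
    x ∈ Set.univ.pi (update (update (fun j => ({y j} : Set β)) k T) k' T') ↔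
      x k ∈ T ∧ x k' ∈ T' ∧ ∀ j, j ≠ k → j ≠ k' → x j = y j := by
  simp only [Set.mem_univ_pi]
  refine ⟨fun h => ⟨?_, ?_, fun j hjk hjk' => ?_⟩, fun ⟨hxk, hxk', hxy⟩ j => ?_⟩
  · simpa [update_of_ne hk] using h k
  · simpa using h k'
  · simpa [update_of_ne hjk, update_of_ne hjk'] using h j
  · rcases eq_or_ne j k' with rfl | hjk'
    · simpa using hxk'
    rcases eq_or_ne j k with rfl | hjk
    · simpa [update_of_ne hk] using hxk
    · simpa [update_of_ne hjk, update_of_ne hjk'] using hxy j hjk hjk'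

lemma pi_univ_pi_update_update {ι β : Type*} [Fintype ι] [DecidableEq ι] [MeasurableSpace β]
    (π : ι → Measure β) [∀ i, SigmaFinite (π i)] {k k' : ι} (hk : k ≠ k') (s : ι → Set β)
    (T T' : Set β) :
    Measure.pi π (Set.univ.pi (update (update s k T) k' T')) =
      π k T * (π k' T' * ∏ j ∈ (univ.erase k).erase k', π j (s j)) := by
  rw [Measure.pi_pi, ← mul_prod_erase univ _ (mem_univ k),
    ← mul_prod_erase (univ.erase k) _ (mem_erase.mpr ⟨hk.symm, mem_univ k'⟩),
    update_of_ne hk, update_self, update_self]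
  congr 2
  refine prod_congr rfl fun j hj => ?_
  obtain ⟨hjk', hj⟩ := mem_erase.mp hj
  rw [update_of_ne hjk', update_of_ne (ne_of_mem_erase hj)]

section collisions

variable {ι β : Type*} [Fintype ι] [DecidableEq β]

def numCollisions (x : ι → β) : ℕ := Fintype.card ι - #(univ.image x)

lemma numCollisions_eq_card_filter [LinearOrder ι] (x : ι → β) :
    numCollisions x = #{i | ∃ l < i, x l = x i} := by
  set F : Finset ι := {i | ∀ l < i, x l ≠ x i}
  have himage : F.image x = univ.image x := by
    refine (image_subset_image (f := x) (subset_univ F)).antisymm fun v hv => ?_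
    obtain ⟨i, -, rfl⟩ := mem_image.mp hv
    obtain ⟨k, hk, hkmin⟩ := exists_min_image {j | x j = x i} id ⟨i, by simp⟩
    refine mem_image.mpr ⟨k, mem_filter.mpr ⟨mem_univ k, fun l hl hlk => ?_⟩, (mem_filter.mp hk).2⟩
    exact (hkmin l (by simp [hlk, (mem_filter.mp hk).2])).not_gt hl
  have hinj : Set.InjOn x F := fun i hi j hj hij => by
    simp only [F, mem_coe, mem_filter, mem_univ, true_and] at hi hj
    by_contra hne
    rcases lt_or_gt_of_ne hne with h | h
    · exact hj i h hij
    · exact hi j h hij.symm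
  have hcompl : #{i | ∃ l < i, x l = x i} + #F = Fintype.card ι := by
    rw [← card_univ, ← card_filter_add_card_filter_not (s := univ) (fun i => ∃ l < i, x l = x i)]
    congr 2
    ext i
    simp [F]
  rw [numCollisions, ← himage, card_image_of_injOn hinj]
  omega

lemma image_update_subset [DecidableEq ι] (x : ι → β) (i : ι) (a : β) :
    univ.image (update x i a) ⊆ insert a (univ.image x) := by
  intro v hv
  obtain ⟨j, -, rfl⟩ := mem_image.mp hv
  rcases eq_or_ne j i with rfl | hj
  · simp
  · simp [update_of_ne hj]

lemma card_image_le_card_image_update [DecidableEq ι] (x : ι → β) (i : ι) (a : β) :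
    #(univ.image x) ≤ #(univ.image (update x i a)) + 1 := by
  calc #(univ.image x) ≤ #(insert (x i) (univ.image (update x i a))) := by
        refine card_le_card ?_
        simpa [update_idem] using image_update_subset (update x i a) i (x i)
    _ ≤ _ := card_insert_le _ _

variable [LinearOrder ι]

def plantCollision (i l : ι) (a : β) (x : ι → β) : ι → β :=
  if ∀ j, l ≤ j → j < i → x j ≠ a then update (update x i a) l a else update x i a

lemma plantCollision_apply_self (i l : ι) (a : β) (x : ι → β) : plantCollision i l a x i = a := by
  unfold plantCollision
  split_ifs
  · rcases eq_or_ne i l with rfl | hil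
    · simp
    · simp [update_of_ne hil]
  · simp

lemma exists_lt_plantCollision_apply_eq {i l : ι} (hl : l < i) (a : β) (x : ι → β) :
    ∃ j < i, plantCollision i l a x j = a := by
  unfold plantCollision
  split_ifs with h
  · exact ⟨l, hl, by simp⟩
  · push Not at h
    obtain ⟨j, -, hj, hxj⟩ := h
    exact ⟨j, hj, by simp [update_of_ne hj.ne, hxj]⟩

lemma numCollisions_plantCollision_sub_mem (i l : ι) (a : β) (x : ι → β) :
    (numCollisions (plantCollision i l a x) : ℤ) - numCollisions x ∈ ({-1, 0, 1, 2} : Set ℤ) := by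
  have hsub : univ.image (plantCollision i l a x) ⊆ insert a (univ.image x) := by
    unfold plantCollision
    split_ifs
    · refine (image_update_subset _ l a).trans ?_
      simpa using insert_subset_insert a (image_update_subset x i a)
    · exact image_update_subset x i a
  have hup : #(univ.image (plantCollision i l a x)) ≤ #(univ.image x) + 1 :=
    (card_le_card hsub).trans (card_insert_le _ _)
  have hlow : #(univ.image x) ≤ #(univ.image (plantCollision i l a x)) + 2 := by
    have h1 := card_image_le_card_image_update x i a
    unfold plantCollision
    split_ifs
    · have h2 := card_image_le_card_image_update (update x i a) l a
      omega
    · omega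
  have hx : #(univ.image x) ≤ Fintype.card ι := card_image_le.trans_eq card_univ
  have hy : #(univ.image (plantCollision i l a x)) ≤ Fintype.card ι :=
    card_image_le.trans_eq card_univ
  simp only [numCollisions, Set.mem_insert_iff, Set.mem_singleton_iff]
  omega

lemma exists_greatest_lt_apply_eq {i : ι} {a : β} {y : ι → β} (h : ∃ l < i, y l = a) :
    ∃ L < i, y L = a ∧ ∀ j, L < j → j < i → y j ≠ a := by
  obtain ⟨l₀, hl₀⟩ := h
  obtain ⟨L, hLmem, hLmax⟩ := exists_max_image (univ.filter fun l => l < i ∧ y l = a) id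
    ⟨l₀, by simpa using hl₀⟩
  obtain ⟨hL, hyL⟩ := (mem_filter.mp hLmem).2
  exact ⟨L, hL, hyL, fun j hLj hji hyj => (hLmax j (by simp [hji, hyj])).not_gt hLj⟩

lemma plantCollision_eq_iff_of_forall_ne {i l L : ι} {a : β} {x y : ι → β} (hl : l < i)
    (hyi : y i = a) (hL : L < i) (hyL : y L = a) (hlast : ∀ j, L < j → j < i → y j ≠ a)
    (h : ∀ j, l ≤ j → j < i → x j ≠ a) :
    plantCollision i l a x = y ↔ l = L ∧ x L ≠ a ∧ ∀ j, j ≠ i → j ≠ L → x j = y j := by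
  rw [plantCollision, if_pos h]
  constructor
  · rintro rfl
    have hlL : l = L := by
      rcases lt_trichotomy l L with hlt | heq | hgt
      · exact absurd hyL (by rw [update_of_ne hlt.ne', update_of_ne hL.ne]; exact h L hlt.le hL)
      · exact heq
      · exact (hlast l hgt hl (by simp)).elim
    subst hlL
    refine ⟨rfl, h l le_rfl hl, fun j hji hjl => ?_⟩
    rw [update_of_ne hjl, update_of_ne hji]
  · rintro ⟨rfl, -, hxy⟩
    ext j
    rcases eq_or_ne j l with rfl | hjl
    · rw [update_self, hyL]
    rcases eq_or_ne j i with rfl | hji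
    · rw [update_of_ne hjl, update_self, hyi]
    · rw [update_of_ne hjl, update_of_ne hji, hxy j hji hjl]

lemma plantCollision_eq_iff_of_exists_eq {i l L k : ι} {a : β} {x y : ι → β} (hyi : y i = a)
    (hlast : ∀ j, L < j → j < i → y j ≠ a) (hlk : l ≤ k) (hki : k < i) (hxk : x k = a) :
    plantCollision i l a x = y ↔ l ≤ L ∧ ∀ j, j ≠ i → x j = y j := by
  rw [plantCollision, if_neg fun h => h k hlk hki hxk]
  constructor
  · rintro rfl
    have hyk : update x i a k = a := by rw [update_of_ne hki.ne, hxk]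
    refine ⟨hlk.trans (not_lt.mp fun hLk => hlast k hLk hki hyk), fun j hji => ?_⟩
    rw [update_of_ne hji]
  · rintro ⟨-, hxy⟩
    ext j
    rcases eq_or_ne j i with rfl | hji
    · rw [update_self, hyi]
    · rw [update_of_ne hji, hxy j hji]

lemma preimage_plantCollision_singleton {i l L : ι} {a : β} {y : ι → β} (hl : l < i)
    (hyi : y i = a) (hL : L < i) (hyL : y L = a) (hlast : ∀ j, L < j → j < i → y j ≠ a) :
    plantCollision i l a ⁻¹' {y} =
      {x | l = L ∧ x L ≠ a ∧ ∀ j, j ≠ i → j ≠ L → x j = y j} ∪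
        {x | l ≤ L ∧ ∀ j, j ≠ i → x j = y j} := by
  ext x
  simp only [Set.mem_preimage, Set.mem_singleton_iff, Set.mem_union, Set.mem_ofPred_eq]
  by_cases h : ∀ j, l ≤ j → j < i → x j ≠ a
  · have hmiss : ¬ (l ≤ L ∧ ∀ j, j ≠ i → x j = y j) := fun ⟨hlL, hxy⟩ =>
      h L hlL hL (by rw [hxy L hL.ne, hyL])
    rw [plantCollision_eq_iff_of_forall_ne hl hyi hL hyL hlast h]
    simp only [hmiss, or_false]
  · push Not at h
    obtain ⟨k, hlk, hki, hxk⟩ := h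
    have hmiss : ¬ (l = L ∧ x L ≠ a ∧ ∀ j, j ≠ i → j ≠ L → x j = y j) := by
      rintro ⟨rfl, hxl, hxy⟩
      rcases hlk.eq_or_lt with rfl | hlk
      · exact hxl hxk
      · exact hlast k hlk hki (by rw [← hxy k hki.ne hlk.ne', hxk])
    rw [plantCollision_eq_iff_of_exists_eq hyi hlast hlk hki hxk]
    simp only [hmiss, false_or]

end collisions

section firstHit

variable {ι β : Type*} [Fintype ι] [LinearOrder ι] [MeasurableSpace β] (π : ι → Measure β)

noncomputable def firstHitProb (a : β) (l : ι) : ℝ≥0∞ := π l {a} * ∏ j with j < l, π j {a}ᶜ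

lemma sum_firstHitProb_add_prod_compl [MeasurableSingletonClass β]
    [∀ i, IsProbabilityMeasure (π i)] (a : β) (L : ι) :
    ∑ l with l ≤ L, firstHitProb π a l + ∏ j with j ≤ L, π j {a}ᶜ = 1 := by
  convert sum_mul_prod_filter_lt_add_prod (fun j => π j {a}) (fun j => π j {a}ᶜ) {j | j ≤ L}
    (fun j _ => prob_add_prob_compl (measurableSet_singleton a)) using 3 with l hl
  rw [firstHitProb, filter_filter]
  congr 2
  ext j
  simp only [mem_filter, mem_univ, true_and]
  exact ⟨fun hjl => ⟨hjl.le.trans (mem_filter.mp hl).2, hjl⟩, And.right⟩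

lemma firstHitProb_mul_prob_compl (a : β) (L : ι) :
    firstHitProb π a L * π L {a}ᶜ = π L {a} * ∏ j with j ≤ L, π j {a}ᶜ := by
  have hIic : univ.filter (· ≤ L) = insert L (univ.filter (· < L)) := by
    ext j
    simp [le_iff_eq_or_lt]
  rw [firstHitProb, hIic, prod_insert (by simp)]
  ring

end firstHit

section coupling

variable {ι β : Type*} [Fintype ι] [LinearOrder ι] [DecidableEq β] [MeasurableSpace β]
  (π : ι → Measure β)

noncomputable def collisionCoupling : Measure ((ι → β) × (ι → β)) :=
  ∑ i, ∑ l with l < i, Measure.sum fun a : β =>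
    (π i {a} * firstHitProb π a l) • (Measure.pi π).map fun x => (x, plantCollision i l a x)

variable [MeasurableSingletonClass β] [Countable β]

lemma collisionCoupling_apply (s : Set ((ι → β) × (ι → β))) :
    collisionCoupling π s = ∑ i, ∑ l with l < i, ∑' a : β, π i {a} * firstHitProb π a l *
      Measure.pi π ((fun x => (x, plantCollision i l a x)) ⁻¹' s) := by
  simp only [collisionCoupling, Measure.finsetSum_apply, Measure.sum_apply _ (.of_discrete),
    Measure.smul_apply, Measure.map_apply (measurable_of_countable _) (.of_discrete), smul_eq_mul]

lemma ae_collisionCoupling_sub_mem :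
    ∀ᵐ z ∂collisionCoupling π,
      (numCollisions z.2 : ℤ) - numCollisions z.1 ∈ ({-1, 0, 1, 2} : Set ℤ) := by
  rw [ae_iff, collisionCoupling_apply]
  refine sum_eq_zero fun i _ => sum_eq_zero fun l _ => ENNReal.tsum_eq_zero.mpr fun a => ?_
  have hempty : (fun x => (x, plantCollision i l a x)) ⁻¹' {z | (numCollisions z.2 : ℤ) -
      numCollisions z.1 ∉ ({-1, 0, 1, 2} : Set ℤ)} = ∅ :=
    Set.eq_empty_of_forall_notMem fun x hx => hx (numCollisions_plantCollision_sub_mem i l a x)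
  rw [hempty, measure_empty, mul_zero]

variable [∀ i, IsProbabilityMeasure (π i)]

lemma pi_preimage_plantCollision_singleton {i l L : ι} {a : β} {y : ι → β} (hl : l < i)
    (hyi : y i = a) (hL : L < i) (hyL : y L = a) (hlast : ∀ j, L < j → j < i → y j ≠ a) :
    Measure.pi π (plantCollision i l a ⁻¹' {y}) =
      ((if l = L then π L {a}ᶜ else 0) + (if l ≤ L then π L {a} else 0)) *
        ∏ j ∈ (univ.erase i).erase L, π j {y j} := by
  set S : ι → Set β := update (fun j => ({y j} : Set β)) i Set.univ
  have hA : {x : ι → β | x L ≠ a ∧ ∀ j, j ≠ i → j ≠ L → x j = y j} =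
      Set.univ.pi (update S L {a}ᶜ) := by
    ext x
    simp [S, mem_univ_pi_update_update hL.ne']
  have hB : {x : ι → β | ∀ j, j ≠ i → x j = y j} = Set.univ.pi (update S L {a}) := by
    ext x
    simp only [S, mem_univ_pi_update_update hL.ne', Set.mem_ofPred_eq, Set.mem_univ,
      Set.mem_singleton_iff, true_and]
    refine ⟨fun h => ⟨(h L hL.ne).trans hyL, fun j hji _ => h j hji⟩, fun ⟨hxL, h⟩ j hji => ?_⟩
    rcases eq_or_ne j L with rfl | hjL
    · rw [hxL, hyL]
    · exact h j hji hjL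
  have hdisj : Disjoint {x : ι → β | l = L ∧ x L ≠ a ∧ ∀ j, j ≠ i → j ≠ L → x j = y j}
      {x | l ≤ L ∧ ∀ j, j ≠ i → x j = y j} :=
    Set.disjoint_left.mpr fun x hxA hxB => hxA.2.1 ((hxB.2 L hL.ne).trans hyL)
  have hPA := pi_univ_pi_update_update π hL.ne' (fun j => ({y j} : Set β)) Set.univ {a}ᶜ
  have hPB := pi_univ_pi_update_update π hL.ne' (fun j => ({y j} : Set β)) Set.univ {a}
  rw [measure_univ, one_mul] at hPA hPB
  rw [preimage_plantCollision_singleton hl hyi hL hyL hlast,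
    measure_union hdisj (.of_discrete), add_mul]
  congr 1
  · split_ifs with hlL
    · simp only [hlL, true_and]
      rw [hA, hPA]
    · simp [hlL]
  · split_ifs with hlL
    · simp only [hlL, true_and]
      rw [hB, hPB]
    · simp [hlL]

lemma sum_mul_pi_preimage_plantCollision (i : ι) (a : β) (y : ι → β) :
    ∑ l with l < i, π i {a} * firstHitProb π a l * Measure.pi π (plantCollision i l a ⁻¹' {y}) =
      if y i = a ∧ ∃ l < i, y l = a then Measure.pi π {y} else 0 := by
  split_ifs with hy
  swap
  · refine sum_eq_zero fun l hl => ?_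
    have hempty : plantCollision i l a ⁻¹' {y} = ∅ := Set.eq_empty_of_forall_notMem fun x hx =>
      hy ⟨hx ▸ plantCollision_apply_self i l a x,
        hx ▸ exists_lt_plantCollision_apply_eq (mem_filter.mp hl).2 a x⟩
    rw [hempty, measure_empty, mul_zero]
  obtain ⟨hyi, hex⟩ := hy
  obtain ⟨L, hL, hyL, hlast⟩ := exists_greatest_lt_apply_eq hex
  set R := ∏ j ∈ (univ.erase i).erase L, π j {y j}
  have hPy : Measure.pi π {y} = π i {a} * (π L {a} * R) := by
    rw [Measure.pi_singleton, ← mul_prod_erase univ _ (mem_univ i),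
      ← mul_prod_erase (univ.erase i) _ (mem_erase.mpr ⟨hL.ne, mem_univ L⟩), hyi, hyL]
  have hIic : (univ.filter fun l => l < i).filter (· ≤ L) = univ.filter (· ≤ L) := by
    rw [filter_filter]
    exact filter_congr fun l _ => ⟨And.right, fun hlL => ⟨hlL.trans_lt hL, hlL⟩⟩
  calc ∑ l with l < i, π i {a} * firstHitProb π a l * Measure.pi π (plantCollision i l a ⁻¹' {y})
      = ∑ l with l < i, ((if l = L then π i {a} * firstHitProb π a l * π L {a}ᶜ * R else 0) +
          (if l ≤ L then π i {a} * firstHitProb π a l * π L {a} * R else 0)) := by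
        refine sum_congr rfl fun l hl => ?_
        rw [pi_preimage_plantCollision_singleton π (mem_filter.mp hl).2 hyi hL hyL hlast]
        split_ifs <;> ring
    _ = π i {a} * R * (firstHitProb π a L * π L {a}ᶜ +
          π L {a} * ∑ l with l ≤ L, firstHitProb π a l) := by
        rw [sum_add_distrib, sum_ite_eq' _ _ _, if_pos (mem_filter.mpr ⟨mem_univ L, hL⟩),
          ← sum_filter, hIic, mul_sum, mul_add, mul_sum]
        congr 1
        · ring
        · exact sum_congr rfl fun l _ => by ring
    _ = Measure.pi π {y} := by
        rw [firstHitProb_mul_prob_compl, ← mul_add, add_comm, sum_firstHitProb_add_prod_compl,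
          hPy]
        ring

lemma map_fst_collisionCoupling :
    (collisionCoupling π).map Prod.fst = collisionCoupling π Set.univ • Measure.pi π := by
  ext s hs
  rw [Measure.map_apply measurable_fst hs, Measure.smul_apply, collisionCoupling_apply,
    collisionCoupling_apply, smul_eq_mul, sum_mul]
  simp only [Set.preimage_univ, measure_univ, mul_one, sum_mul, ← ENNReal.tsum_mul_right]
  rfl

lemma map_snd_collisionCoupling :
    (collisionCoupling π).map Prod.snd =
      (Measure.pi π).withDensity fun x => (numCollisions x : ℝ≥0∞) := by
  refine Measure.ext_iff_singleton.mpr fun y => ?_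
  rw [Measure.map_apply measurable_snd (.of_discrete), collisionCoupling_apply,
    withDensity_apply _ (measurableSet_singleton y), lintegral_singleton,
    numCollisions_eq_card_filter]
  calc ∑ i, ∑ l with l < i, ∑' a : β, π i {a} * firstHitProb π a l *
        Measure.pi π ((fun x => (x, plantCollision i l a x)) ⁻¹' (Prod.snd ⁻¹' {y}))
      = ∑ i, ∑' a : β, if y i = a ∧ ∃ l < i, y l = a then Measure.pi π {y} else 0 := by
        refine sum_congr rfl fun i _ => ?_
        rw [← Summable.tsum_finsetSum fun _ _ => ENNReal.summable]
        exact tsum_congr fun a => sum_mul_pi_preimage_plantCollision π i a y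
    _ = ∑ i, if ∃ l < i, y l = y i then Measure.pi π {y} else 0 := by
        refine sum_congr rfl fun i _ => ?_
        rw [tsum_eq_single (y i) fun a ha => if_neg fun h => ha h.1.symm]
        simp
    _ = _ := by rw [← sum_filter, sum_const, nsmul_eq_mul]

end coupling

lemma sizeBiased_map_eq {α : Type*} [MeasurableSpace α] {P : Measure α} {f : α → ℕ}
    (hf : Measurable f) (m : ℝ) :
    sizeBiased (P.map f) m =
      (ENNReal.ofReal m)⁻¹ • (P.withDensity fun x => (f x : ℝ≥0∞)).map f := by
  refine Measure.ext_iff_singleton.mpr fun k => ?_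
  have hk : MeasurableSet (f ⁻¹' {k}) := hf (measurableSet_singleton k)
  rw [sizeBiased, Measure.sum_smul_dirac_singleton, Measure.smul_apply,
    Measure.map_apply hf (measurableSet_singleton k),
    Measure.map_apply hf (measurableSet_singleton k), withDensity_apply _ hk,
    setLIntegral_congr_fun hk (g := fun _ => (k : ℝ≥0∞)) fun x (hx : f x = k) => by rw [hx],
    setLIntegral_const, smul_eq_mul, div_eq_mul_inv, mul_comm]

theorem exists_coupling_map_sizeBiased {α : Type*} [MeasurableSpace α] {P : Measure α}
    {f : α → ℕ} (hf : Measurable f) {Λ : Measure (α × α)}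
    (hfst : Λ.map Prod.fst = Λ Set.univ • P)
    (hsnd : Λ.map Prod.snd = P.withDensity fun x => (f x : ℝ≥0∞))
    {S : Set ℤ} (hS : ∀ᵐ z ∂Λ, (f z.2 : ℤ) - f z.1 ∈ S)
    {m : ℝ} (hm : m = ∫ x, (f x : ℝ) ∂P) (hmpos : 0 < m) :
    ∃ ν : Measure (ℕ × ℕ), IsProbabilityMeasure ν ∧ ν.map Prod.fst = P.map f ∧
      ν.map Prod.snd = sizeBiased (P.map f) m ∧ ν {p : ℕ × ℕ | (p.2 : ℤ) - (p.1 : ℤ) ∉ S} = 0 := by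
  have hW : Λ Set.univ = ENNReal.ofReal m := by
    have hint : Integrable (fun x => (f x : ℝ)) P := .of_integral_ne_zero (hm ▸ hmpos.ne')
    have hsnd_univ : Λ Set.univ = Λ.map Prod.snd Set.univ := by
      rw [Measure.map_apply measurable_snd .univ, Set.preimage_univ]
    rw [hm, ofReal_integral_eq_lintegral_ofReal hint (ae_of_all _ fun x => Nat.cast_nonneg _),
      hsnd_univ, hsnd, withDensity_apply _ .univ, Measure.restrict_univ]
    simp_rw [ENNReal.ofReal_natCast]
  have hW0 : Λ Set.univ ≠ 0 := hW ▸ (ENNReal.ofReal_pos.mpr hmpos).ne'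
  have hWtop : Λ Set.univ ≠ ∞ := hW ▸ ENNReal.ofReal_ne_top
  have hff : Measurable (Prod.map f f) := hf.prodMap hf
  have hmarginal {g : ℕ × ℕ → ℕ} {h : α × α → α} (hg : Measurable g) (hh : Measurable h)
      (hgh : g ∘ Prod.map f f = f ∘ h) :
      ((Λ Set.univ)⁻¹ • Λ.map (Prod.map f f)).map g = (Λ Set.univ)⁻¹ • (Λ.map h).map f := by
    rw [Measure.map_smul, Measure.map_map hg hff, hgh, Measure.map_map hf hh]
  refine ⟨(Λ Set.univ)⁻¹ • Λ.map (Prod.map f f), ⟨?_⟩, ?_, ?_, ?_⟩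
  · rw [Measure.smul_apply, Measure.map_apply hff .univ, Set.preimage_univ, smul_eq_mul,
      ENNReal.inv_mul_cancel hW0 hWtop]
  · rw [hmarginal measurable_fst measurable_fst rfl, hfst, Measure.map_smul, smul_smul,
      ENNReal.inv_mul_cancel hW0 hWtop, one_smul]
  · rw [hmarginal measurable_snd measurable_snd rfl, hsnd, sizeBiased_map_eq hf, hW]
  · rw [Measure.smul_apply, Measure.map_apply hff (.of_discrete), smul_eq_mul]
    exact mul_eq_zero_of_right _ (ae_iff.mp hS)

theorem stmt_16_general {Ω : Type*} [MeasurableSpace Ω] (μ : Measure Ω) [IsProbabilityMeasure μ]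
    (b : ℕ)
    (X : Fin b → Ω → ℕ) (hmeas : ∀ i, Measurable (X i))
    (hindep : iIndepFun X μ)
    (C : Ω → ℕ) (hC : ∀ ω, C ω = b - (Finset.univ.image fun i => X i ω).card)
    (m : ℝ) (hm : m = ∫ ω, (C ω : ℝ) ∂μ) (hmpos : 0 < m) :
    ∃ ν : Measure (ℕ × ℕ), IsProbabilityMeasure ν ∧
      ν.map Prod.fst = μ.map C ∧
      ν.map Prod.snd = sizeBiased (μ.map C) m ∧
      ν {p : ℕ × ℕ | (p.2 : ℤ) - (p.1 : ℤ) ∉ ({-1, 0, 1, 2} : Set ℤ)} = 0 := by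
  have hX : Measurable fun ω i => X i ω := measurable_pi_lambda _ hmeas
  have hprob : ∀ i, IsProbabilityMeasure (μ.map (X i)) :=
    fun i => Measure.isProbabilityMeasure_map (hmeas i).aemeasurable
  have hlaw : μ.map (fun ω i => X i ω) = Measure.pi fun i => μ.map (X i) :=
    hindep.map_fun_eq_pi_map fun i => (hmeas i).aemeasurable
  have hCX : C = numCollisions ∘ fun ω i => X i ω := funext fun ω => by
    simp [hC, numCollisions]
  have hlawC : μ.map C = (Measure.pi fun i => μ.map (X i)).map numCollisions := by
    rw [hCX, ← Measure.map_map (measurable_of_countable _) hX, hlaw]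
  rw [hlawC]
  refine exists_coupling_map_sizeBiased (measurable_of_countable _)
    (map_fst_collisionCoupling _) (map_snd_collisionCoupling _)
    (ae_collisionCoupling_sub_mem _) ?_ hmpos
  rw [hm, hCX, ← hlaw, integral_map hX.aemeasurable (.of_discrete)]
  rfl

theorem stmt_16 {Ω : Type*} [MeasurableSpace Ω] (μ : Measure Ω) [IsProbabilityMeasure μ]
    (n b : ℕ) (hn : 1 ≤ n) (hb : 2 ≤ b)
    (X : Fin b → Ω → ℕ) (hmeas : ∀ i, Measurable (X i))
    (hindep : iIndepFun X μ)
    (hrange : ∀ i ω, X i ω ∈ Finset.Icc 1 n)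
    (C : Ω → ℕ) (hC : ∀ ω, C ω = b - (Finset.univ.image fun i => X i ω).card)
    (m : ℝ) (hm : m = ∫ ω, (C ω : ℝ) ∂μ) (hmpos : 0 < m) :
    ∃ ν : Measure (ℕ × ℕ), IsProbabilityMeasure ν ∧
      ν.map Prod.fst = μ.map C ∧
      ν.map Prod.snd = sizeBiased (μ.map C) m ∧
      ν {p : ℕ × ℕ | (p.2 : ℤ) - (p.1 : ℤ) ∉ ({-1, 0, 1, 2} : Set ℤ)} = 0 :=
  stmt_16_general μ b X hmeas hindep C hC m hm hmpos
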